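/- arXiv:2603.19221 — 2 statements merged into one kernel-verified Lean document; each statement's English description precedes it below -/
import Mathlib

section
/- Let σ be the logistic function and σ^{-1} its inverse. If x̃, x* ∈ [-1,1], τ > 0, and |σ(x̃/τ) − σ(x*/τ)| ≤ ε, then |x̃ − x*| ≤ τ(e^{1/τ}+1)^2 · ε. -/
noncomputable def logistic (x : ℝ) : ℝ := Real.exp x / (1 + Real.exp x)

open Real Set

lemma logistic_eq_sigmoid : logistic = sigmoid := by
  ext x
  rw [logistic, sigmoid_def, Real.exp_neg]
  field_simp
  ring

lemma inv_exp_add_one_sq_le_sigmoid_mul_one_sub_sigmoid {r x : ℝ} (hx : |x| ≤ r) :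
    ((exp r + 1) ^ 2)⁻¹ ≤ sigmoid x * (1 - sigmoid x) := by
  rw [← sigmoid_neg, sigmoid_def, sigmoid_def, neg_neg, ← mul_inv]
  refine inv_anti₀ (by positivity) ?_
  have hpos : exp x ≤ exp r := exp_le_exp.2 (le_of_abs_le hx)
  have hneg : exp (-x) ≤ exp r := exp_le_exp.2 (neg_le.1 (neg_le_of_abs_le hx))
  have hone : 1 ≤ exp r := one_le_exp ((abs_nonneg x).trans hx)
  have hprod : exp (-x) * exp x = 1 := by rw [← exp_add, neg_add_cancel, exp_zero]
  nlinarith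

/-- On `[-r, r]` the derivative of `sigmoid` is at least `(exp r + 1)⁻²`, so the inverse of
`sigmoid` is `(exp r + 1)²`-Lipschitz there. -/
lemma sub_le_mul_sigmoid_sub {r x y : ℝ} (hx : x ∈ Icc (-r) r) (hy : y ∈ Icc (-r) r)
    (hxy : x ≤ y) : y - x ≤ (exp r + 1) ^ 2 * (sigmoid y - sigmoid x) := by
  have hderiv : ∀ z ∈ interior (Icc (-r) r), ((exp r + 1) ^ 2)⁻¹ ≤ deriv sigmoid z := by
    intro z hz
    rw [interior_Icc] at hz
    rw [deriv_sigmoid]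
    exact inv_exp_add_one_sq_le_sigmoid_mul_one_sub_sigmoid (abs_le.2 ⟨hz.1.le, hz.2.le⟩)
  have hmvt := (convex_Icc (-r) r).mul_sub_le_image_sub_of_le_deriv
    continuous_sigmoid.continuousOn differentiable_sigmoid.differentiableOn hderiv x hx y hy hxy
  rwa [inv_mul_le_iff₀ (by positivity)] at hmvt

lemma abs_sub_le_mul_abs_sigmoid_sub {r x y : ℝ} (hx : x ∈ Icc (-r) r) (hy : y ∈ Icc (-r) r) :
    |x - y| ≤ (exp r + 1) ^ 2 * |sigmoid x - sigmoid y| := by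
  rcases le_total x y with hxy | hyx
  · rw [abs_sub_comm x, abs_sub_comm (sigmoid x), abs_of_nonneg (sub_nonneg.2 hxy),
      abs_of_nonneg (sub_nonneg.2 (sigmoid_le hxy))]
    exact sub_le_mul_sigmoid_sub hx hy hxy
  · rw [abs_of_nonneg (sub_nonneg.2 hyx), abs_of_nonneg (sub_nonneg.2 (sigmoid_le hyx))]
    exact sub_le_mul_sigmoid_sub hy hx hyx

lemma div_mem_Icc_neg_one_div {τ x : ℝ} (hτ : 0 < τ) (hx : x ∈ Icc (-1 : ℝ) 1) :
    x / τ ∈ Icc (-(1 / τ)) (1 / τ) := by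
  rw [← neg_div]
  exact ⟨div_le_div_of_nonneg_right hx.1 hτ.le, div_le_div_of_nonneg_right hx.2 hτ.le⟩

theorem stmt_2 (τ : ℝ) (hτ : 0 < τ) (xt xs ε : ℝ)
    (hxt : xt ∈ Set.Icc (-1 : ℝ) 1) (hxs : xs ∈ Set.Icc (-1 : ℝ) 1)
    (hε : |logistic (xt / τ) - logistic (xs / τ)| ≤ ε) :
    |xt - xs| ≤ τ * (Real.exp (1 / τ) + 1) ^ 2 * ε := by
  rw [logistic_eq_sigmoid] at hε
  have hscaled := abs_sub_le_mul_abs_sigmoid_sub (div_mem_Icc_neg_one_div hτ hxt)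
    (div_mem_Icc_neg_one_div hτ hxs)
  calc |xt - xs| = τ * |xt / τ - xs / τ| := by
        rw [← sub_div, abs_div, abs_of_pos hτ, mul_div_cancel₀ _ hτ.ne']
    _ ≤ τ * ((exp (1 / τ) + 1) ^ 2 * ε) := by gcongr; exact hscaled.trans (by gcongr)
    _ = τ * (exp (1 / τ) + 1) ^ 2 * ε := (mul_assoc _ _ _).symm
end

section
/- Under the Plackett–Luce model with temperature τ > 0 over a multiset S with |S| = K, for any distinct actions a ≠ b occurring in S, the expected number of ordered pairs of positions (k₁ < k₂) with σ(k₁) = a and σ(k₂) = b equals #_S(a)·#_S(b)·σ((u(a)−u(b))/τ), where σ is the logistic function. -/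
/-- Plackett–Luce probability of a ranking (list) `l` of the proposed actions. -/
noncomputable def PLprob {A : Type*} (u : A → ℝ) (τ : ℝ) : List A → ℝ
  | [] => 1
  | a :: rest =>
      Real.exp (u a / τ) / (((a :: rest).map fun b => Real.exp (u b / τ)).sum) *
        PLprob u τ rest

/-- Number of pairs of positions `k₁ < k₂` in the list with `l_{k₁} = a` and `l_{k₂} = b`. -/
def pairCount {A : Type*} [DecidableEq A] (a b : A) : List A → ℕ
  | [] => 0
  | x :: rest => (if x = a then rest.count b else 0) + pairCount a b rest

/-!
Condition on the head of the ranking: under Plackett–Luce it is `y` with probability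
`w y / W`, where `w y = exp (u y / τ)` and `W = Σ_{y ∈ L} w y`, and the tail is a Plackett–Luce
ranking of `L.erase y`. A head equal to `a` precedes all `#b` copies of `b`, so by induction on
the length the expected pair count `E` satisfies `W · E = Σ_{y ∈ L} w y (𝟙[y = a] #b + E')`,
where `E'` is the value for `L.erase y`. The guess `#a #b p` solves this recursion because
`p (w a + w b) = w a` for `p = σ ((u a - u b) / τ)`.
-/

theorem logistic_sub_mul_exp_add_exp (x y : ℝ) :
    logistic (x - y) * (Real.exp x + Real.exp y) = Real.exp x := by
  have h : Real.exp (x - y) * Real.exp y = Real.exp x := by rw [← Real.exp_add, sub_add_cancel]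
  rw [logistic, div_mul_eq_mul_div, div_eq_iff (by positivity)]
  linear_combination h

namespace List

variable {α M : Type*} [AddCommMonoid M]

theorem Perm.sum_map_permutations {s t : List α} (h : s ~ t) (f : List α → M) :
    (s.permutations.map f).sum = (t.permutations.map f).sum :=
  (h.permutations.map f).sum_eq

theorem sum_map_permutations_cons (x : α) (l : List α) (f : List α → M) :
    ((permutations (x :: l)).map f).sum =
      ((permutations l).map fun σ => ((permutations'Aux x σ).map f).sum).sum := by
  rw [((permutations_perm_permutations' _).map f).sum_eq,
    ((permutations_perm_permutations' l).map _).sum_eq]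
  simp [permutations', flatMap, sum_flatten, Function.comp_def]

theorem sum_map_permutations'Aux_cons (x y : α) (l : List α) (f : List α → M) :
    ((permutations'Aux x (y :: l)).map f).sum =
      f (x :: y :: l) + ((permutations'Aux x l).map fun σ => f (y :: σ)).sum := by
  simp [permutations'Aux, Function.comp_def]

theorem length_erase_lt_of_mem [BEq α] [LawfulBEq α] {y : α} {l : List α} (hy : y ∈ l) :
    (l.erase y).length < l.length := by
  rw [length_erase_of_mem hy]
  exact Nat.sub_one_lt_of_lt (length_pos_of_mem hy)

theorem perm_erase_cons_of_mem [DecidableEq α] (x : α) {y : α} {l : List α} (hy : y ∈ l) :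
    (x :: l).erase y ~ x :: l.erase y := by
  by_cases hxy : x = y
  · subst hxy
    rw [erase_cons_head]
    exact perm_cons_erase hy
  · rw [erase_cons_tail (by simpa using hxy)]

theorem sum_map_permutations_eq_sum_erase [DecidableEq α] {l : List α} (hl : l ≠ [])
    (f : List α → M) :
    ((permutations l).map f).sum =
      (l.map fun y => ((permutations (l.erase y)).map fun σ => f (y :: σ)).sum).sum := by
  induction l generalizing f with
  | nil => exact absurd rfl hl
  | cons x l ih =>
    rcases eq_or_ne l [] with rfl | hl'
    · simp [permutations]
    rw [sum_map_permutations_cons, ih hl']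
    simp only [sum_map_permutations'Aux_cons, sum_map_add, map_cons, sum_cons, erase_cons_head]
    rw [ih hl' fun σ => f (x :: σ)]
    congr 1
    refine congrArg sum (map_congr_left fun y hy => ?_)
    rw [(perm_erase_cons_of_mem x hy).sum_map_permutations, sum_map_permutations_cons]

end List

open List

namespace PlackettLuce

variable {A : Type*} (u : A → ℝ) (τ : ℝ)

noncomputable def weight (y : A) : ℝ := Real.exp (u y / τ)

noncomputable def expectation (l : List A) (g : List A → ℝ) : ℝ :=
  ((permutations l).map fun σ => PLprob u τ σ * g σ).sum

theorem PLprob_cons (y : A) (l : List A) :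
    PLprob u τ (y :: l) =
      weight u τ y / (weight u τ y + (l.map (weight u τ)).sum) * PLprob u τ l := rfl

theorem sum_weight_pos {l : List A} (hl : l ≠ []) : 0 < (l.map (weight u τ)).sum := by
  obtain ⟨y, l, rfl⟩ := exists_cons_of_ne_nil hl
  rw [map_cons, sum_cons]
  exact add_pos_of_pos_of_nonneg (Real.exp_pos _)
    (sum_nonneg fun _ hr => by obtain ⟨_, _, rfl⟩ := mem_map.1 hr; exact (Real.exp_pos _).le)

variable {u τ}

theorem expectation_congr {l : List A} {g g' : List A → ℝ} (h : ∀ σ, σ ~ l → g σ = g' σ) :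
    expectation u τ l g = expectation u τ l g' := by
  unfold expectation
  rw [map_congr_left fun σ hσ => by rw [h σ (mem_permutations.1 hσ)]]

variable [DecidableEq A]

theorem expectation_eq_sum_erase {l : List A} (hl : l ≠ []) (g : List A → ℝ) :
    expectation u τ l g =
      (l.map fun y => weight u τ y / (l.map (weight u τ)).sum *
        expectation u τ (l.erase y) fun σ => g (y :: σ)).sum := by
  rw [expectation, sum_map_permutations_eq_sum_erase hl]
  refine congrArg sum (map_congr_left fun y hy => ?_)
  rw [expectation, ← sum_map_mul_left]
  refine congrArg sum (map_congr_left fun σ hσ => ?_)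
  have hW : weight u τ y + (σ.map (weight u τ)).sum = (l.map (weight u τ)).sum := by
    rw [← sum_cons, ← map_cons, ((mem_permutations.1 hσ).cons y |>.trans
      (perm_cons_erase hy).symm |>.map _).sum_eq]
  rw [PLprob_cons, hW]
  ring

theorem expectation_one (l : List A) : expectation u τ l (fun _ => 1) = 1 := by
  rcases eq_or_ne l [] with rfl | hl
  · simp [expectation, PLprob]
  rw [expectation_eq_sum_erase hl]
  have hrest : ∀ y ∈ l, expectation u τ (l.erase y) (fun _ => 1) = 1 := fun y hy =>
    expectation_one (l.erase y)
  rw [map_congr_left fun y hy => by rw [hrest y hy, mul_one]]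
  simp only [div_eq_mul_inv, sum_map_mul_right]
  exact mul_inv_cancel₀ (sum_weight_pos u τ hl).ne'
termination_by l.length
decreasing_by exact length_erase_lt_of_mem hy

theorem expectation_const_add (l : List A) (c : ℝ) (g : List A → ℝ) :
    expectation u τ l (fun σ => c + g σ) = c + expectation u τ l g := by
  conv_rhs => rw [← mul_one c, ← expectation_one (u := u) (τ := τ) l]
  simp only [expectation, ← sum_map_mul_left, ← sum_map_add]
  congr 1
  exact map_congr_left fun σ _ => by ring

theorem expectation_pairCount {a b : A} (hab : a ≠ b) {p : ℝ}
    (hp : p * (weight u τ a + weight u τ b) = weight u τ a) (l : List A) :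
    expectation u τ l (fun σ => pairCount a b σ) = l.count a * l.count b * p := by
  rcases eq_or_ne l [] with rfl | hl
  · simp [expectation, pairCount]
  have hstep : ∀ y ∈ l, expectation u τ (l.erase y) (fun σ => pairCount a b (y :: σ)) =
      l.count a * l.count b * p + (if y = a then l.count b * (1 - p) else 0) +
        (if y = b then -(l.count a * p) else 0) := by
    intro y hy
    have hcount : ∀ x, ((l.erase y).count x : ℝ) = l.count x - if y = x then 1 else 0 := by
      intro x
      rw [(perm_cons_erase hy).count_eq x, count_cons]
      split_ifs <;> simp_all
    have hhead : ∀ σ, σ ~ l.erase y → (pairCount a b (y :: σ) : ℝ) =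
        (if y = a then ((l.erase y).count b : ℝ) else 0) + pairCount a b σ := by
      intro σ hσ
      rw [← hσ.count_eq]
      simp only [pairCount]
      push_cast [apply_ite (Nat.cast : ℕ → ℝ)]
      rfl
    rw [expectation_congr hhead, expectation_const_add, expectation_pairCount hab hp (l.erase y),
      hcount, hcount]
    by_cases hya : y = a
    · subst hya
      simp only [↓reduceIte, hab, sub_zero, add_zero]
      ring
    · by_cases hyb : y = b
      · subst hyb
        simp only [hya, ↓reduceIte, sub_zero, zero_add, add_zero]
        ring
      · simp [hya, hyb]
  rw [expectation_eq_sum_erase hl, map_congr_left fun y hy => by rw [hstep y hy]]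
  simp only [div_eq_mul_inv, sum_map_mul_right, mul_add, mul_ite, mul_zero, sum_map_add,
    sum_map_ite_eq, map_const', sum_replicate, smul_zero, add_zero, sub_zero, nsmul_eq_mul,
    mul_inv_cancel₀ (sum_weight_pos u τ hl).ne', one_mul]
  linear_combination
    (-(l.count a * l.count b * ((l.map (weight u τ)).sum)⁻¹ : ℝ)) * hp
termination_by l.length
decreasing_by exact length_erase_lt_of_mem hy

end PlackettLuce

theorem stmt_4_general {A : Type*} [DecidableEq A] (u : A → ℝ) (τ : ℝ)
    (L : List A) (a b : A) (hab : a ≠ b) :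
    (L.permutations.map fun l => PLprob u τ l * (pairCount a b l : ℝ)).sum =
      (L.count a : ℝ) * (L.count b : ℝ) * logistic ((u a - u b) / τ) := by
  have hp : logistic ((u a - u b) / τ) *
      (PlackettLuce.weight u τ a + PlackettLuce.weight u τ b) = PlackettLuce.weight u τ a := by
    rw [sub_div]
    exact logistic_sub_mul_exp_add_exp _ _
  exact PlackettLuce.expectation_pairCount hab hp L

theorem stmt_4 {A : Type*} [DecidableEq A] (u : A → ℝ) (τ : ℝ) (hτ : 0 < τ)
    (L : List A) (a b : A) (hab : a ≠ b) (ha : a ∈ L) (hb : b ∈ L) :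
    (L.permutations.map fun l => PLprob u τ l * (pairCount a b l : ℝ)).sum =
      (L.count a : ℝ) * (L.count b : ℝ) * logistic ((u a - u b) / τ) :=
  stmt_4_general u τ L a b hab
end
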